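/- Suppose the function ω ↦ s(B(ω), C(ω)) is integrable, as are ω ↦ s(0, C(ω)) and ω ↦ s(1, C(ω)). If E[s(B, C) | σ(C)] = 0 almost surely, then almost surely s(B(ω), C(ω)) = (s(1, C(ω)) − s(0, C(ω))) · (B(ω) − E[B | σ(C)](ω)). (Here E[B | σ(C)] is a version of the conditional probability P(B = 1 | C).) -/

import Mathlib

/-!
On `{0, 1}` every function is affine, so `s (B, C) = s (0, C) + (s (1, C) - s (0, C)) * B`, where
both coefficients are `σ(C)`-measurable. Pulling them out of the conditional expectation turns the
hypothesis `E[s (B, C) | σ(C)] = 0` into `s (0, C) = -(s (1, C) - s (0, C)) * E[B | σ(C)]`;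
substituting this back gives the claim.
-/

open MeasureTheory

lemma apply_eq_add_sub_mul_of_eq_zero_or_eq_one {R : Type*} [Ring R] (g : R → R) {b : R}
    (hb : b = 0 ∨ b = 1) : g b = g 0 + (g 1 - g 0) * b := by
  rcases hb with rfl | rfl <;> simp

section CondExp

variable {Ω : Type*} {m mΩ : MeasurableSpace Ω} {μ : Measure Ω} {f g X : Ω → ℝ}

lemma condExp_add_mul_of_stronglyMeasurable (hm : m ≤ mΩ) [SigmaFinite (μ.trim hm)]
    (hg : StronglyMeasurable[m] g) (hf : StronglyMeasurable[m] f) (hgi : Integrable g μ)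
    (hfX : Integrable (f * X) μ) (hX : Integrable X μ) :
    μ[g + f * X | m] =ᵐ[μ] g + f * μ[X | m] := by
  refine (condExp_add hgi hfX m).trans (.add ?_ ?_)
  · rw [condExp_of_stronglyMeasurable hm hg hgi]
  · exact condExp_mul_of_stronglyMeasurable_left hf hfX hX

lemma add_mul_ae_eq_mul_sub_condExp (hm : m ≤ mΩ) [SigmaFinite (μ.trim hm)]
    (hg : StronglyMeasurable[m] g) (hf : StronglyMeasurable[m] f) (hgi : Integrable g μ)
    (hfX : Integrable (f * X) μ) (hX : Integrable X μ) (hcond : μ[g + f * X | m] =ᵐ[μ] 0) :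
    g + f * X =ᵐ[μ] f * (X - μ[X | m]) := by
  have hg_eq : g + f * μ[X | m] =ᵐ[μ] 0 :=
    (condExp_add_mul_of_stronglyMeasurable hm hg hf hgi hfX hX).symm.trans hcond
  filter_upwards [hg_eq] with ω hω
  simp only [Pi.add_apply, Pi.mul_apply, Pi.sub_apply, Pi.zero_apply] at hω ⊢
  linear_combination hω

end CondExp

theorem binary_action_centering
    {Ω E : Type*} {mΩ : MeasurableSpace Ω} {mE : MeasurableSpace E}
    (μ : Measure Ω) [IsProbabilityMeasure μ]
    (C : Ω → E) (hC : Measurable C)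
    (B : Ω → ℝ) (hB : Measurable B) (hB01 : ∀ ω, B ω = 0 ∨ B ω = 1)
    (s : ℝ × E → ℝ) (hs : Measurable s)
    (hint : Integrable (fun ω => s (B ω, C ω)) μ)
    (hint0 : Integrable (fun ω => s (0, C ω)) μ)
    (hcond : μ[(fun ω => s (B ω, C ω))|MeasurableSpace.comap C mE] =ᵐ[μ] 0) :
    (fun ω => s (B ω, C ω)) =ᵐ[μ]
      fun ω => (s (1, C ω) - s (0, C ω)) *
        (B ω - (μ[B|MeasurableSpace.comap C mE]) ω) := by
  set g : Ω → ℝ := fun ω => s (0, C ω)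
  set f : Ω → ℝ := fun ω => s (1, C ω) - s (0, C ω)
  have hsplit : (fun ω => s (B ω, C ω)) = g + f * B := funext fun ω =>
    apply_eq_add_sub_mul_of_eq_zero_or_eq_one (fun b => s (b, C ω)) (hB01 ω)
  have hCm : Measurable[mE.comap C] C := comap_measurable C
  have hs_slice (b : ℝ) : Measurable fun e => s (b, e) := hs.comp measurable_prodMk_left
  have hg : StronglyMeasurable[mE.comap C] g := ((hs_slice 0).comp hCm).stronglyMeasurable
  have hf : StronglyMeasurable[mE.comap C] f :=
    (((hs_slice 1).sub (hs_slice 0)).comp hCm).stronglyMeasurable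
  have hBi : Integrable B μ := .of_bound hB.aestronglyMeasurable 1 <| .of_forall fun ω => by
    rcases hB01 ω with h | h <;> simp [h]
  have hfB : Integrable (f * B) μ := by
    simpa [hsplit] using hint.sub hint0
  rw [hsplit] at hcond ⊢
  exact add_mul_ae_eq_mul_sub_condExp hC.comap_le hg hf hint0 hfB hBi hcond
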